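/- arXiv:1512.04514 — 2 statements merged into one kernel-verified Lean document; each statement's English description precedes it below -/
import Mathlib

section
/- Concavity in the input: fix a finite-alphabet channel kernel family Q_i(b_i|b^{i-1},a^i), i = 0,...,n. The map that sends the 'causally conditioned' input distribution P(a^n || b^{n-1}) := ∏_{i=0}^n P_i(a_i|a^{i-1},b^{i-1}) (viewed as an element of the convex set of causally conditioned pmfs) to the directed information I(A^n → B^n) of the induced joint pmf is concave. -/
open Finset

/-- Time indices `j ≤ i`. -/
def idxLe (n : ℕ) (i : Fin (n+1)) : Finset (Fin (n+1)) :=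
  Finset.univ.filter fun j => (j : ℕ) ≤ (i : ℕ)

/-- Time indices `j < i`. -/
def idxLt (n : ℕ) (i : Fin (n+1)) : Finset (Fin (n+1)) :=
  Finset.univ.filter fun j => (j : ℕ) < (i : ℕ)

/-- Time indices `i - M ≤ j < i` (the window of the last `M` outputs). -/
def idxWin (n : ℕ) (i : Fin (n+1)) (M : ℕ) : Finset (Fin (n+1)) :=
  Finset.univ.filter fun j => (j : ℕ) < (i : ℕ) ∧ (i : ℕ) ≤ (j : ℕ) + M

variable {n : ℕ} {A B : Type} [Fintype A] [Fintype B] [DecidableEq A] [DecidableEq B]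

/-- Marginal of the joint pmf `μ` on the `A`-coordinates in `SA` and the
`B`-coordinates in `SB`, evaluated at `(a, b)`. -/
noncomputable def marg (μ : (Fin (n+1) → A) → (Fin (n+1) → B) → ℝ)
    (SA SB : Finset (Fin (n+1))) (a : Fin (n+1) → A) (b : Fin (n+1) → B) : ℝ :=
  ∑ a' : Fin (n+1) → A, ∑ b' : Fin (n+1) → B,
    if (∀ j ∈ SA, a' j = a j) ∧ (∀ j ∈ SB, b' j = b j) then μ a' b' else 0

/-- Marginal of `μ` on `B`-coordinates in `SB`. -/
noncomputable def margB (μ : (Fin (n+1) → A) → (Fin (n+1) → B) → ℝ)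
    (SB : Finset (Fin (n+1))) (b : Fin (n+1) → B) : ℝ :=
  ∑ a' : Fin (n+1) → A, ∑ b' : Fin (n+1) → B,
    if ∀ j ∈ SB, b' j = b j then μ a' b' else 0

/-- The induced conditional output pmf `Π_i(b_i | b^{i-1})`. -/
noncomputable def outCond (μ : (Fin (n+1) → A) → (Fin (n+1) → B) → ℝ)
    (i : Fin (n+1)) (b : Fin (n+1) → B) : ℝ :=
  margB μ (idxLe n i) b / margB μ (idxLt n i) b

/-- Conditional mutual information `I(A_{TA}; B_i | B_{SB})` under `μ`
(terms with zero joint probability vanish). -/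
noncomputable def cmi (μ : (Fin (n+1) → A) → (Fin (n+1) → B) → ℝ)
    (TA : Finset (Fin (n+1))) (i : Fin (n+1)) (SB : Finset (Fin (n+1))) : ℝ :=
  ∑ a : Fin (n+1) → A, ∑ b : Fin (n+1) → B,
    μ a b * Real.log (marg μ TA (insert i SB) a b * marg μ ∅ SB a b /
      (marg μ TA SB a b * marg μ ∅ (insert i SB) a b))

/-- Directed information `I(A^n → B^n) = ∑_i I(A^i; B_i | B^{i-1})`. -/
noncomputable def DI (μ : (Fin (n+1) → A) → (Fin (n+1) → B) → ℝ) : ℝ :=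
  ∑ i : Fin (n+1), cmi μ (idxLe n i) i (idxLt n i)

/-- A family of channel kernels `Q_i(b_i | b^{i-1}, a^i)`: nonnegative, summing to one
over `b_i`, and depending only on `(a^i, b^i)`. -/
def IsChannel (Q : Fin (n+1) → (Fin (n+1) → A) → (Fin (n+1) → B) → ℝ) : Prop :=
  (∀ i a b, 0 ≤ Q i a b) ∧
  (∀ i a b, ∑ x : B, Q i a (Function.update b i x) = 1) ∧
  (∀ (i : Fin (n+1)) (a a' : Fin (n+1) → A) (b b' : Fin (n+1) → B),
    (∀ j : Fin (n+1), (j:ℕ) ≤ (i:ℕ) → a j = a' j) →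
    (∀ j : Fin (n+1), (j:ℕ) ≤ (i:ℕ) → b j = b' j) → Q i a b = Q i a' b')

/-- A family of feedback input kernels `P_i(a_i | a^{i-1}, b^{i-1})`: nonnegative,
summing to one over `a_i`, and depending only on `(a^i, b^{i-1})`. -/
def IsInput (P : Fin (n+1) → (Fin (n+1) → A) → (Fin (n+1) → B) → ℝ) : Prop :=
  (∀ i a b, 0 ≤ P i a b) ∧
  (∀ i a b, ∑ x : A, P i (Function.update a i x) b = 1) ∧
  (∀ (i : Fin (n+1)) (a a' : Fin (n+1) → A) (b b' : Fin (n+1) → B),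
    (∀ j : Fin (n+1), (j:ℕ) ≤ (i:ℕ) → a j = a' j) →
    (∀ j : Fin (n+1), (j:ℕ) < (i:ℕ) → b j = b' j) → P i a b = P i a' b')

/-- The joint pmf induced by channel kernels `Q` and input kernels `P`. -/
noncomputable def joint (Q P : Fin (n+1) → (Fin (n+1) → A) → (Fin (n+1) → B) → ℝ)
    (a : Fin (n+1) → A) (b : Fin (n+1) → B) : ℝ :=
  ∏ i : Fin (n+1), Q i a b * P i a b


section Aux

lemma sum_split {α : Type} [Fintype α] [DecidableEq α] {ι : Type} [Fintype ι] [DecidableEq ι]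
    (m : ι) (c : α) (F : (ι → α) → ℝ) :
    ∑ f : ι → α, F f
      = ∑ x : α, ∑ f : ι → α, if f m = c then F (Function.update f m x) else 0 := by
  have h : ∀ x : α, (∑ f : ι → α, if f m = c then F (Function.update f m x) else 0)
      = ∑ f ∈ univ.filter (fun f : ι → α => f m = c), F (Function.update f m x) := by
    intro x
    rw [Finset.sum_filter]
  simp only [h]
  rw [← Finset.sum_product']
  refine (Finset.sum_nbij' (fun f => (f m, Function.update f m c))
    (fun p => Function.update p.2 m p.1) ?_ ?_ ?_ ?_ ?_)
  · intro f _
    simp [Finset.mem_product]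
  · intro p _; simp
  · intro f _
    simp [Function.update_idem]
  · intro p hp
    simp only [Finset.mem_product, Finset.mem_filter] at hp
    have h2 : Function.update (Function.update p.2 m p.1) m c = p.2 := by
      rw [Function.update_idem, ← hp.2.2, Function.update_eq_self]
    exact Prod.ext (by simp) h2
  · intro f _
    simp [Function.update_idem]

variable {n : ℕ} {A B : Type} [Fintype A] [Fintype B] [DecidableEq A] [DecidableEq B]

/-- Auxiliary "pinned" sum: coordinates outside `sA`/`sB` are pinned to `a`/`b`,
and the summand is the product of input kernels over `sA` and channel kernels over `sB`. -/
noncomputable def pinSum (Q P : Fin (n+1) → (Fin (n+1) → A) → (Fin (n+1) → B) → ℝ)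
    (a : Fin (n+1) → A) (b : Fin (n+1) → B) (sA sB : Finset (Fin (n+1))) : ℝ :=
  ∑ a' : Fin (n+1) → A, ∑ b' : Fin (n+1) → B,
    if (∀ j, j ∉ sA → a' j = a j) ∧ (∀ j, j ∉ sB → b' j = b j)
      then (∏ j ∈ sA, P j a' b') * ∏ j ∈ sB, Q j a' b' else 0

lemma pinSum_empty (Q P : Fin (n+1) → (Fin (n+1) → A) → (Fin (n+1) → B) → ℝ)
    (a : Fin (n+1) → A) (b : Fin (n+1) → B) :
    pinSum Q P a b ∅ ∅ = 1 := by
  unfold pinSum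
  have h : ∀ (a' : Fin (n+1) → A) (b' : Fin (n+1) → B),
      ((∀ j, j ∉ (∅ : Finset (Fin (n+1))) → a' j = a j) ∧
        (∀ j, j ∉ (∅ : Finset (Fin (n+1))) → b' j = b j)) ↔ (a' = a ∧ b' = b) := by
    intro a' b'
    simp [funext_iff]
  simp only [Finset.prod_empty, one_mul]
  rw [Finset.sum_eq_single a]
  · rw [Finset.sum_eq_single b]
    · simp [h]
    · intro b' _ hb'
      rw [if_neg]
      rw [h]
      exact fun hc => hb' hc.2
    · intro hb; exact absurd (Finset.mem_univ b) hb
  · intro a' _ ha'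
    apply Finset.sum_eq_zero
    intro b' _
    rw [if_neg]
    rw [h]
    exact fun hc => ha' hc.1
  · intro ha; exact absurd (Finset.mem_univ a) ha

lemma pinSum_eq_one (Q P : Fin (n+1) → (Fin (n+1) → A) → (Fin (n+1) → B) → ℝ)
    (hQ : IsChannel Q) (hP : IsInput P)
    (a : Fin (n+1) → A) (b : Fin (n+1) → B) :
    ∀ (N : ℕ) (sA sB : Finset (Fin (n+1))), sA.card + sB.card ≤ N →
      pinSum Q P a b sA sB = 1 := by
  intro N
  induction N with
  | zero =>
    intro sA sB hc
    have hA : sA = ∅ := Finset.card_eq_zero.1 (by omega)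
    have hB : sB = ∅ := Finset.card_eq_zero.1 (by omega)
    rw [hA, hB]; exact pinSum_empty Q P a b
  | succ N ih =>
    intro sA sB hc
    rcases (sA ∪ sB).eq_empty_or_nonempty with he | hne
    · have hA : sA = ∅ := by
        have := Finset.union_eq_empty.1 he; exact this.1
      have hB : sB = ∅ := (Finset.union_eq_empty.1 he).2
      rw [hA, hB]; exact pinSum_empty Q P a b
    · set m := (sA ∪ sB).max' hne with hm
      have hmmem : m ∈ sA ∪ sB := Finset.max'_mem _ hne
      have hmax : ∀ j, j ∈ sA ∪ sB → (j : ℕ) ≤ (m : ℕ) :=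
        fun j hj => Finset.le_max' _ j hj
      by_cases hmB : m ∈ sB
      · -- sum out the coordinate b'_m
        have step : pinSum Q P a b sA sB = pinSum Q P a b sA (sB.erase m) := by
          unfold pinSum
          refine Finset.sum_congr rfl ?_
          intro a' _
          rw [sum_split m (b m) (fun b' => if (∀ j, j ∉ sA → a' j = a j) ∧
              (∀ j, j ∉ sB → b' j = b j)
              then (∏ j ∈ sA, P j a' b') * ∏ j ∈ sB, Q j a' b' else 0)]
          rw [Finset.sum_comm]
          refine Finset.sum_congr rfl ?_
          intro b' _
          by_cases hC : (∀ j, j ∉ sA → a' j = a j) ∧ (∀ j, j ∉ sB.erase m → b' j = b j)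
          · rw [if_pos hC]
            have hbm : b' m = b m := hC.2 m (Finset.notMem_erase m sB)
            have hcond : ∀ y : B, (∀ j, j ∉ sA → a' j = a j) ∧
                (∀ j, j ∉ sB → Function.update b' m y j = b j) := by
              intro y
              refine ⟨hC.1, fun j hj => ?_⟩
              have hjm : j ≠ m := fun h => hj (h ▸ hmB)
              rw [Function.update_of_ne hjm]
              exact hC.2 j (fun h => hj (Finset.mem_of_mem_erase h))
            have hval : ∀ y : B,
                (∏ j ∈ sA, P j a' (Function.update b' m y)) *
                  ∏ j ∈ sB, Q j a' (Function.update b' m y)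
                = ((∏ j ∈ sA, P j a' b') * ∏ j ∈ sB.erase m, Q j a' b') *
                    Q m a' (Function.update b' m y) := by
              intro y
              have hPfac : ∀ j ∈ sA, P j a' (Function.update b' m y) = P j a' b' := by
                intro j hj
                refine hP.2.2 j a' a' _ b' (fun _ _ => rfl) (fun j' hj' => ?_)
                have hjle : (j : ℕ) ≤ (m : ℕ) := hmax j (Finset.mem_union_left _ hj)
                have : j' ≠ m := by
                  intro h; subst h; omega
                exact Function.update_of_ne this _ _
              have hQfac : ∀ j ∈ sB.erase m, Q j a' (Function.update b' m y) = Q j a' b' := by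
                intro j hj
                have hjm : j ≠ m := Finset.ne_of_mem_erase hj
                have hjle : (j : ℕ) ≤ (m : ℕ) :=
                  hmax j (Finset.mem_union_right _ (Finset.mem_of_mem_erase hj))
                have hjlt : (j : ℕ) < (m : ℕ) := by
                  rcases lt_or_eq_of_le hjle with h | h
                  · exact h
                  · exact absurd (Fin.ext h) hjm
                refine hQ.2.2 j a' a' _ b' (fun _ _ => rfl) (fun j' hj' => ?_)
                have : j' ≠ m := by
                  intro h; subst h; omega
                exact Function.update_of_ne this _ _
              rw [Finset.prod_congr rfl hPfac]
              rw [← Finset.mul_prod_erase sB (fun j => Q j a' (Function.update b' m y)) hmB]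
              rw [Finset.prod_congr rfl hQfac]
              ring
            calc (∑ y : B, if b' m = b m then
                    (if (∀ j, j ∉ sA → a' j = a j) ∧
                      (∀ j, j ∉ sB → Function.update b' m y j = b j)
                    then (∏ j ∈ sA, P j a' (Function.update b' m y)) *
                      ∏ j ∈ sB, Q j a' (Function.update b' m y) else 0) else 0)
                = ∑ y : B, ((∏ j ∈ sA, P j a' b') * ∏ j ∈ sB.erase m, Q j a' b') *
                    Q m a' (Function.update b' m y) := by
                  refine Finset.sum_congr rfl fun y _ => ?_
                  rw [if_pos hbm, if_pos (hcond y), hval y]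
              _ = ((∏ j ∈ sA, P j a' b') * ∏ j ∈ sB.erase m, Q j a' b') *
                    ∑ y : B, Q m a' (Function.update b' m y) := by
                  rw [Finset.mul_sum]
              _ = (∏ j ∈ sA, P j a' b') * ∏ j ∈ sB.erase m, Q j a' b' := by
                  rw [hQ.2.1 m a' b', mul_one]
          · rw [if_neg hC]
            apply Finset.sum_eq_zero
            intro y _
            by_cases hbm : b' m = b m
            · rw [if_pos hbm]
              rw [if_neg]
              intro hcond
              apply hC
              refine ⟨hcond.1, fun j hj => ?_⟩
              by_cases hjm : j = m
              · subst hjm; exact hbm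
              · have hjB : j ∉ sB := fun h => hj (Finset.mem_erase.2 ⟨hjm, h⟩)
                have := hcond.2 j hjB
                rwa [Function.update_of_ne hjm] at this
            · rw [if_neg hbm]
        rw [step]
        refine ih sA (sB.erase m) ?_
        have := Finset.card_erase_of_mem hmB
        have hpos : 0 < sB.card := Finset.card_pos.2 ⟨m, hmB⟩
        omega
      · -- m ∈ sA, sum out the coordinate a'_m
        have hmA : m ∈ sA := by
          rcases Finset.mem_union.1 hmmem with h | h
          · exact h
          · exact absurd h hmB
        have step : pinSum Q P a b sA sB = pinSum Q P a b (sA.erase m) sB := by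
          unfold pinSum
          rw [sum_split m (a m) (fun a' => ∑ b' : Fin (n+1) → B,
            if (∀ j, j ∉ sA → a' j = a j) ∧ (∀ j, j ∉ sB → b' j = b j)
              then (∏ j ∈ sA, P j a' b') * ∏ j ∈ sB, Q j a' b' else 0)]
          rw [Finset.sum_comm]
          refine Finset.sum_congr rfl ?_
          intro a' _
          by_cases ham : a' m = a m
          · simp only [if_pos ham]
            rw [Finset.sum_comm]
            refine Finset.sum_congr rfl ?_
            intro b' _
            by_cases hC : (∀ j, j ∉ sA.erase m → a' j = a j) ∧ (∀ j, j ∉ sB → b' j = b j)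
            · rw [if_pos hC]
              have hcond : ∀ x : A, (∀ j, j ∉ sA → Function.update a' m x j = a j) ∧
                  (∀ j, j ∉ sB → b' j = b j) := by
                intro x
                refine ⟨fun j hj => ?_, hC.2⟩
                have hjm : j ≠ m := fun h => hj (h ▸ hmA)
                rw [Function.update_of_ne hjm]
                exact hC.1 j (fun h => hj (Finset.mem_of_mem_erase h))
              have hval : ∀ x : A,
                  (∏ j ∈ sA, P j (Function.update a' m x) b') *
                    ∏ j ∈ sB, Q j (Function.update a' m x) b'
                  = ((∏ j ∈ sA.erase m, P j a' b') * ∏ j ∈ sB, Q j a' b') *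
                      P m (Function.update a' m x) b' := by
                intro x
                have hQfac : ∀ j ∈ sB, Q j (Function.update a' m x) b' = Q j a' b' := by
                  intro j hj
                  have hjm : j ≠ m := fun h => hmB (h ▸ hj)
                  have hjle : (j : ℕ) ≤ (m : ℕ) := hmax j (Finset.mem_union_right _ hj)
                  have hjlt : (j : ℕ) < (m : ℕ) := by
                    rcases lt_or_eq_of_le hjle with h | h
                    · exact h
                    · exact absurd (Fin.ext h) hjm
                  refine hQ.2.2 j _ a' b' b' (fun j' hj' => ?_) (fun _ _ => rfl)
                  have : j' ≠ m := by intro h; subst h; omega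
                  exact Function.update_of_ne this _ _
                have hPfac : ∀ j ∈ sA.erase m, P j (Function.update a' m x) b' = P j a' b' := by
                  intro j hj
                  have hjm : j ≠ m := Finset.ne_of_mem_erase hj
                  have hjle : (j : ℕ) ≤ (m : ℕ) :=
                    hmax j (Finset.mem_union_left _ (Finset.mem_of_mem_erase hj))
                  have hjlt : (j : ℕ) < (m : ℕ) := by
                    rcases lt_or_eq_of_le hjle with h | h
                    · exact h
                    · exact absurd (Fin.ext h) hjm
                  refine hP.2.2 j _ a' b' b' (fun j' hj' => ?_) (fun _ _ => rfl)
                  have : j' ≠ m := by intro h; subst h; omega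
                  exact Function.update_of_ne this _ _
                rw [Finset.prod_congr rfl hQfac]
                rw [← Finset.mul_prod_erase sA (fun j => P j (Function.update a' m x) b') hmA]
                rw [Finset.prod_congr rfl hPfac]
                ring
              calc (∑ x : A, if (∀ j, j ∉ sA → Function.update a' m x j = a j) ∧
                      (∀ j, j ∉ sB → b' j = b j)
                    then (∏ j ∈ sA, P j (Function.update a' m x) b') *
                      ∏ j ∈ sB, Q j (Function.update a' m x) b' else 0)
                  = ∑ x : A, ((∏ j ∈ sA.erase m, P j a' b') * ∏ j ∈ sB, Q j a' b') *
                      P m (Function.update a' m x) b' := by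
                    refine Finset.sum_congr rfl fun x _ => ?_
                    rw [if_pos (hcond x), hval x]
                _ = ((∏ j ∈ sA.erase m, P j a' b') * ∏ j ∈ sB, Q j a' b') *
                      ∑ x : A, P m (Function.update a' m x) b' := by
                    rw [Finset.mul_sum]
                _ = (∏ j ∈ sA.erase m, P j a' b') * ∏ j ∈ sB, Q j a' b' := by
                    rw [hP.2.1 m a' b', mul_one]
            · rw [if_neg hC]
              apply Finset.sum_eq_zero
              intro x _
              rw [if_neg]
              intro hcond
              apply hC
              refine ⟨fun j hj => ?_, hcond.2⟩
              by_cases hjm : j = m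
              · subst hjm; exact ham
              · have hjA : j ∉ sA := fun h => hj (Finset.mem_erase.2 ⟨hjm, h⟩)
                have := hcond.1 j hjA
                rwa [Function.update_of_ne hjm] at this
          · simp only [if_neg ham]
            rw [Finset.sum_const_zero, eq_comm]
            apply Finset.sum_eq_zero
            intro b' _
            rw [if_neg]
            intro hC
            exact ham (hC.1 m (Finset.notMem_erase m sA))
        rw [step]
        refine ih (sA.erase m) sB ?_
        have := Finset.card_erase_of_mem hmA
        have hpos : 0 < sA.card := Finset.card_pos.2 ⟨m, hmA⟩
        omega

end Aux

section Fact

variable {n : ℕ} {A B : Type} [Fintype A] [Fintype B] [DecidableEq A] [DecidableEq B]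

lemma insert_idxLt (i : Fin (n+1)) : insert i (idxLt n i) = idxLe n i := by
  ext j
  simp only [Finset.mem_insert, idxLt, idxLe, Finset.mem_filter, Finset.mem_univ, true_and]
  constructor
  · rintro (rfl | h)
    · exact le_refl _
    · omega
  · intro h
    rcases Nat.lt_or_ge (j : ℕ) (i : ℕ) with h' | h'
    · exact Or.inr h'
    · left
      exact Fin.ext (by omega)

lemma i_notMem_idxLt (i : Fin (n+1)) : i ∉ idxLt n i := by
  simp [idxLt]

lemma marg_joint_le_le (Q P : Fin (n+1) → (Fin (n+1) → A) → (Fin (n+1) → B) → ℝ)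
    (hQ : IsChannel Q) (hP : IsInput P) (i : Fin (n+1))
    (a : Fin (n+1) → A) (b : Fin (n+1) → B) :
    marg (joint Q P) (idxLe n i) (idxLe n i) a b
      = ∏ j ∈ idxLe n i, (Q j a b * P j a b) := by
  classical
  set sA : Finset (Fin (n+1)) := univ.filter (fun j => ¬((j:ℕ) ≤ (i:ℕ))) with hsA
  have hnot : ∀ j : Fin (n+1), j ∉ sA ↔ (j:ℕ) ≤ (i:ℕ) := by
    intro j; simp [hsA]
  have hmem : ∀ j : Fin (n+1), j ∈ idxLe n i ↔ (j:ℕ) ≤ (i:ℕ) := by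
    intro j; simp [idxLe]
  have key : ∀ (a' : Fin (n+1) → A) (b' : Fin (n+1) → B),
      (if (∀ j ∈ idxLe n i, a' j = a j) ∧ (∀ j ∈ idxLe n i, b' j = b j)
        then joint Q P a' b' else 0)
      = (∏ j ∈ idxLe n i, (Q j a b * P j a b)) *
        (if (∀ j, j ∉ sA → a' j = a j) ∧ (∀ j, j ∉ sA → b' j = b j)
          then (∏ j ∈ sA, P j a' b') * ∏ j ∈ sA, Q j a' b' else 0) := by
    intro a' b'
    have hiff : ((∀ j ∈ idxLe n i, a' j = a j) ∧ (∀ j ∈ idxLe n i, b' j = b j))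
        ↔ ((∀ j, j ∉ sA → a' j = a j) ∧ (∀ j, j ∉ sA → b' j = b j)) := by
      constructor
      · rintro ⟨h1, h2⟩
        exact ⟨fun j hj => h1 j ((hmem j).2 ((hnot j).1 hj)),
               fun j hj => h2 j ((hmem j).2 ((hnot j).1 hj))⟩
      · rintro ⟨h1, h2⟩
        exact ⟨fun j hj => h1 j ((hnot j).2 ((hmem j).1 hj)),
               fun j hj => h2 j ((hnot j).2 ((hmem j).1 hj))⟩
    by_cases hc : (∀ j ∈ idxLe n i, a' j = a j) ∧ (∀ j ∈ idxLe n i, b' j = b j)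
    · rw [if_pos hc, if_pos (hiff.1 hc)]
      unfold joint
      rw [← Finset.prod_filter_mul_prod_filter_not univ (fun j : Fin (n+1) => (j:ℕ) ≤ (i:ℕ))
        (fun j => Q j a' b' * P j a' b')]
      have e1 : (univ.filter (fun j : Fin (n+1) => (j:ℕ) ≤ (i:ℕ))) = idxLe n i := rfl
      have e2 : (univ.filter (fun j : Fin (n+1) => ¬((j:ℕ) ≤ (i:ℕ)))) = sA := rfl
      rw [e1, e2]
      have hfst : ∏ j ∈ idxLe n i, (Q j a' b' * P j a' b')
          = ∏ j ∈ idxLe n i, (Q j a b * P j a b) := by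
        refine Finset.prod_congr rfl fun j hj => ?_
        have hji : (j : ℕ) ≤ (i : ℕ) := (hmem j).1 hj
        have hQ' : Q j a' b' = Q j a b :=
          hQ.2.2 j a' a b' b (fun j' hj' => hc.1 j' ((hmem j').2 (le_trans hj' hji)))
            (fun j' hj' => hc.2 j' ((hmem j').2 (le_trans hj' hji)))
        have hP' : P j a' b' = P j a b :=
          hP.2.2 j a' a b' b (fun j' hj' => hc.1 j' ((hmem j').2 (le_trans hj' hji)))
            (fun j' hj' => hc.2 j' ((hmem j').2 (le_trans (le_of_lt hj') hji)))
        rw [hQ', hP']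
      rw [hfst]
      simp only [Finset.prod_mul_distrib]
      ring
    · rw [if_neg hc, if_neg (fun h => hc (hiff.2 h)), mul_zero]
  have hone : (∑ a' : Fin (n+1) → A, ∑ b' : Fin (n+1) → B,
      if (∀ j, j ∉ sA → a' j = a j) ∧ (∀ j, j ∉ sA → b' j = b j)
        then (∏ j ∈ sA, P j a' b') * ∏ j ∈ sA, Q j a' b' else 0) = 1 := by
    have := pinSum_eq_one Q P hQ hP a b (sA.card + sA.card) sA sA (le_refl _)
    unfold pinSum at this
    exact this
  unfold marg
  simp only [key]
  simp only [← Finset.mul_sum]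
  rw [hone, mul_one]

lemma marg_joint_le_lt (Q P : Fin (n+1) → (Fin (n+1) → A) → (Fin (n+1) → B) → ℝ)
    (hQ : IsChannel Q) (hP : IsInput P) (i : Fin (n+1))
    (a : Fin (n+1) → A) (b : Fin (n+1) → B) :
    marg (joint Q P) (idxLe n i) (idxLt n i) a b
      = P i a b * ∏ j ∈ idxLt n i, (Q j a b * P j a b) := by
  classical
  set sA : Finset (Fin (n+1)) := univ.filter (fun j => ¬((j:ℕ) ≤ (i:ℕ))) with hsA
  set sB : Finset (Fin (n+1)) := univ.filter (fun j => ¬((j:ℕ) < (i:ℕ))) with hsB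
  have hnotA : ∀ j : Fin (n+1), j ∉ sA ↔ (j:ℕ) ≤ (i:ℕ) := by
    intro j; simp [hsA]
  have hnotB : ∀ j : Fin (n+1), j ∉ sB ↔ (j:ℕ) < (i:ℕ) := by
    intro j; simp [hsB]
  have hmemLe : ∀ j : Fin (n+1), j ∈ idxLe n i ↔ (j:ℕ) ≤ (i:ℕ) := by
    intro j; simp [idxLe]
  have hmemLt : ∀ j : Fin (n+1), j ∈ idxLt n i ↔ (j:ℕ) < (i:ℕ) := by
    intro j; simp [idxLt]
  have hiB : i ∈ sB := by simp [hsB]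
  have herase : sB.erase i = sA := by
    ext j
    simp only [Finset.mem_erase, hsA, hsB, Finset.mem_filter, Finset.mem_univ, true_and,
      Ne, Fin.ext_iff]
    omega
  have key : ∀ (a' : Fin (n+1) → A) (b' : Fin (n+1) → B),
      (if (∀ j ∈ idxLe n i, a' j = a j) ∧ (∀ j ∈ idxLt n i, b' j = b j)
        then joint Q P a' b' else 0)
      = (P i a b * ∏ j ∈ idxLt n i, (Q j a b * P j a b)) *
        (if (∀ j, j ∉ sA → a' j = a j) ∧ (∀ j, j ∉ sB → b' j = b j)
          then (∏ j ∈ sA, P j a' b') * ∏ j ∈ sB, Q j a' b' else 0) := by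
    intro a' b'
    have hiff : ((∀ j ∈ idxLe n i, a' j = a j) ∧ (∀ j ∈ idxLt n i, b' j = b j))
        ↔ ((∀ j, j ∉ sA → a' j = a j) ∧ (∀ j, j ∉ sB → b' j = b j)) := by
      constructor
      · rintro ⟨h1, h2⟩
        exact ⟨fun j hj => h1 j ((hmemLe j).2 ((hnotA j).1 hj)),
               fun j hj => h2 j ((hmemLt j).2 ((hnotB j).1 hj))⟩
      · rintro ⟨h1, h2⟩
        exact ⟨fun j hj => h1 j ((hnotA j).2 ((hmemLe j).1 hj)),
               fun j hj => h2 j ((hnotB j).2 ((hmemLt j).1 hj))⟩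
    by_cases hc : (∀ j ∈ idxLe n i, a' j = a j) ∧ (∀ j ∈ idxLt n i, b' j = b j)
    · rw [if_pos hc, if_pos (hiff.1 hc)]
      unfold joint
      rw [← Finset.prod_filter_mul_prod_filter_not univ (fun j : Fin (n+1) => (j:ℕ) < (i:ℕ))
        (fun j => Q j a' b' * P j a' b')]
      have e1 : (univ.filter (fun j : Fin (n+1) => (j:ℕ) < (i:ℕ))) = idxLt n i := rfl
      have e2 : (univ.filter (fun j : Fin (n+1) => ¬((j:ℕ) < (i:ℕ)))) = sB := rfl
      rw [e1, e2]
      have hfst : ∏ j ∈ idxLt n i, (Q j a' b' * P j a' b')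
          = ∏ j ∈ idxLt n i, (Q j a b * P j a b) := by
        refine Finset.prod_congr rfl fun j hj => ?_
        have hji : (j : ℕ) < (i : ℕ) := (hmemLt j).1 hj
        have hQ' : Q j a' b' = Q j a b :=
          hQ.2.2 j a' a b' b
            (fun j' hj' => hc.1 j' ((hmemLe j').2 (by omega)))
            (fun j' hj' => hc.2 j' ((hmemLt j').2 (by omega)))
        have hP' : P j a' b' = P j a b :=
          hP.2.2 j a' a b' b
            (fun j' hj' => hc.1 j' ((hmemLe j').2 (by omega)))
            (fun j' hj' => hc.2 j' ((hmemLt j').2 (by omega)))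
        rw [hQ', hP']
      have hPi : P i a' b' = P i a b :=
        hP.2.2 i a' a b' b
          (fun j' hj' => hc.1 j' ((hmemLe j').2 hj'))
          (fun j' hj' => hc.2 j' ((hmemLt j').2 hj'))
      have hsnd : ∏ j ∈ sB, (P j a' b')
          = P i a b * ∏ j ∈ sA, P j a' b' := by
        rw [← Finset.mul_prod_erase sB (fun j => P j a' b') hiB, herase, hPi]
      rw [hfst]
      simp only [Finset.prod_mul_distrib]
      rw [hsnd]
      ring
    · rw [if_neg hc, if_neg (fun h => hc (hiff.2 h)), mul_zero]
  have hone : (∑ a' : Fin (n+1) → A, ∑ b' : Fin (n+1) → B,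
      if (∀ j, j ∉ sA → a' j = a j) ∧ (∀ j, j ∉ sB → b' j = b j)
        then (∏ j ∈ sA, P j a' b') * ∏ j ∈ sB, Q j a' b' else 0) = 1 := by
    have := pinSum_eq_one Q P hQ hP a b (sA.card + sB.card) sA sB (le_refl _)
    unfold pinSum at this
    exact this
  unfold marg
  simp only [key]
  simp only [← Finset.mul_sum]
  rw [hone, mul_one]

/-- The chain rule: the `(≤ i, ≤ i)` marginal of the joint equals `Q i` times the
`(≤ i, < i)` marginal. -/
lemma marg_chain (Q P : Fin (n+1) → (Fin (n+1) → A) → (Fin (n+1) → B) → ℝ)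
    (hQ : IsChannel Q) (hP : IsInput P) (i : Fin (n+1))
    (a : Fin (n+1) → A) (b : Fin (n+1) → B) :
    marg (joint Q P) (idxLe n i) (idxLe n i) a b
      = Q i a b * marg (joint Q P) (idxLe n i) (idxLt n i) a b := by
  rw [marg_joint_le_le Q P hQ hP, marg_joint_le_lt Q P hQ hP]
  rw [← insert_idxLt i, Finset.prod_insert (i_notMem_idxLt i)]
  ring

end Fact

section Basic

variable {n : ℕ} {A B : Type} [Fintype A] [Fintype B] [DecidableEq A] [DecidableEq B]

lemma idxLt_subset (i : Fin (n+1)) : idxLt n i ⊆ idxLe n i := by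
  intro j hj
  simp only [idxLt, idxLe, Finset.mem_filter, Finset.mem_univ, true_and] at *
  omega

lemma marg_empty_left (μ : (Fin (n+1) → A) → (Fin (n+1) → B) → ℝ)
    (SB : Finset (Fin (n+1))) (a : Fin (n+1) → A) (b : Fin (n+1) → B) :
    marg μ ∅ SB a b = margB μ SB b := by
  unfold marg margB
  refine Finset.sum_congr rfl fun a' _ => Finset.sum_congr rfl fun b' _ => ?_
  simp

lemma le_marg (μ : (Fin (n+1) → A) → (Fin (n+1) → B) → ℝ)
    (hμ : ∀ a b, 0 ≤ μ a b) (SA SB : Finset (Fin (n+1)))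
    (a : Fin (n+1) → A) (b : Fin (n+1) → B) :
    μ a b ≤ marg μ SA SB a b := by
  unfold marg
  have h1 : μ a b ≤ ∑ b' : Fin (n+1) → B,
      if (∀ j ∈ SA, a j = a j) ∧ (∀ j ∈ SB, b' j = b j) then μ a b' else 0 := by
    have : μ a b = if (∀ j ∈ SA, a j = a j) ∧ (∀ j ∈ SB, b j = b j) then μ a b else 0 := by
      rw [if_pos ⟨fun _ _ => rfl, fun _ _ => rfl⟩]
    rw [this]
    refine Finset.single_le_sum (f := fun b' => if (∀ j ∈ SA, a j = a j) ∧
      (∀ j ∈ SB, b' j = b j) then μ a b' else 0) (fun b' _ => ?_) (Finset.mem_univ b)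
    simp only []
    split_ifs
    · exact hμ _ _
    · exact le_refl _
  refine le_trans h1 ?_
  refine Finset.single_le_sum (f := fun a' => ∑ b' : Fin (n+1) → B,
    if (∀ j ∈ SA, a' j = a j) ∧ (∀ j ∈ SB, b' j = b j) then μ a' b' else 0)
    (fun a' _ => ?_) (Finset.mem_univ a)
  refine Finset.sum_nonneg fun b' _ => ?_
  split_ifs
  · exact hμ _ _
  · exact le_refl _

lemma le_margB (μ : (Fin (n+1) → A) → (Fin (n+1) → B) → ℝ)
    (hμ : ∀ a b, 0 ≤ μ a b) (SB : Finset (Fin (n+1)))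
    (a : Fin (n+1) → A) (b : Fin (n+1) → B) :
    μ a b ≤ margB μ SB b := by
  unfold margB
  have h1 : μ a b ≤ ∑ b' : Fin (n+1) → B, if ∀ j ∈ SB, b' j = b j then μ a b' else 0 := by
    have : μ a b = if ∀ j ∈ SB, b j = b j then μ a b else 0 := by
      rw [if_pos (fun _ _ => rfl)]
    rw [this]
    refine Finset.single_le_sum (f := fun b' => if ∀ j ∈ SB, b' j = b j
      then μ a b' else 0) (fun b' _ => ?_) (Finset.mem_univ b)
    split_ifs
    · exact hμ _ _
    · exact le_refl _
  refine le_trans h1 ?_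
  refine Finset.single_le_sum (f := fun a' => ∑ b' : Fin (n+1) → B,
    if ∀ j ∈ SB, b' j = b j then μ a' b' else 0)
    (fun a' _ => ?_) (Finset.mem_univ a)
  refine Finset.sum_nonneg fun b' _ => ?_
  split_ifs
  · exact hμ _ _
  · exact le_refl _

lemma margB_nonneg (μ : (Fin (n+1) → A) → (Fin (n+1) → B) → ℝ)
    (hμ : ∀ a b, 0 ≤ μ a b) (SB : Finset (Fin (n+1))) (b : Fin (n+1) → B) :
    0 ≤ margB μ SB b := by
  refine Finset.sum_nonneg fun a' _ => Finset.sum_nonneg fun b' _ => ?_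
  split_ifs
  · exact hμ _ _
  · exact le_refl _

lemma margB_mono (μ : (Fin (n+1) → A) → (Fin (n+1) → B) → ℝ)
    (hμ : ∀ a b, 0 ≤ μ a b) {SB SB' : Finset (Fin (n+1))} (h : SB' ⊆ SB)
    (b : Fin (n+1) → B) :
    margB μ SB b ≤ margB μ SB' b := by
  refine Finset.sum_le_sum fun a' _ => Finset.sum_le_sum fun b' _ => ?_
  by_cases hc : ∀ j ∈ SB, b' j = b j
  · rw [if_pos hc, if_pos (fun j hj => hc j (h hj))]
  · rw [if_neg hc]
    split_ifs
    · exact hμ _ _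
    · exact le_refl _

lemma margB_congr (μ : (Fin (n+1) → A) → (Fin (n+1) → B) → ℝ)
    (SB : Finset (Fin (n+1))) (b b'' : Fin (n+1) → B)
    (h : ∀ j ∈ SB, b j = b'' j) :
    margB μ SB b = margB μ SB b'' := by
  refine Finset.sum_congr rfl fun a' _ => Finset.sum_congr rfl fun b' _ => ?_
  have : (∀ j ∈ SB, b' j = b j) ↔ (∀ j ∈ SB, b' j = b'' j) := by
    constructor
    · intro hc j hj; rw [hc j hj, h j hj]
    · intro hc j hj; rw [hc j hj, ← h j hj]
  by_cases hc : ∀ j ∈ SB, b' j = b j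
  · rw [if_pos hc, if_pos (this.1 hc)]
  · rw [if_neg hc, if_neg (fun h' => hc (this.2 h'))]

lemma marg_mix (μ₁ μ₂ : (Fin (n+1) → A) → (Fin (n+1) → B) → ℝ) (t s : ℝ)
    (SA SB : Finset (Fin (n+1))) (a : Fin (n+1) → A) (b : Fin (n+1) → B) :
    marg (fun a' b' => t * μ₁ a' b' + s * μ₂ a' b') SA SB a b
      = t * marg μ₁ SA SB a b + s * marg μ₂ SA SB a b := by
  unfold marg
  rw [Finset.mul_sum, Finset.mul_sum, ← Finset.sum_add_distrib]
  refine Finset.sum_congr rfl fun a' _ => ?_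
  rw [Finset.mul_sum, Finset.mul_sum, ← Finset.sum_add_distrib]
  refine Finset.sum_congr rfl fun b' _ => ?_
  split_ifs <;> simp

lemma margB_mix (μ₁ μ₂ : (Fin (n+1) → A) → (Fin (n+1) → B) → ℝ) (t s : ℝ)
    (SB : Finset (Fin (n+1))) (b : Fin (n+1) → B) :
    margB (fun a' b' => t * μ₁ a' b' + s * μ₂ a' b') SB b
      = t * margB μ₁ SB b + s * margB μ₂ SB b := by
  unfold margB
  rw [Finset.mul_sum, Finset.mul_sum, ← Finset.sum_add_distrib]
  refine Finset.sum_congr rfl fun a' _ => ?_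
  rw [Finset.mul_sum, Finset.mul_sum, ← Finset.sum_add_distrib]
  refine Finset.sum_congr rfl fun b' _ => ?_
  split_ifs <;> simp

end Basic

section LogSum

open Real

/-- Two-term log-sum inequality, with `Real.log 0 = 0` conventions. -/
lemma logsum2 (u₁ u₂ v₁ v₂ : ℝ) (hu₁ : 0 ≤ u₁) (hu₂ : 0 ≤ u₂)
    (h₁ : u₁ ≤ v₁) (h₂ : u₂ ≤ v₂) :
    (u₁ + u₂) * (Real.log (u₁ + u₂) - Real.log (v₁ + v₂))
      ≤ u₁ * (Real.log u₁ - Real.log v₁) + u₂ * (Real.log u₂ - Real.log v₂) := by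
  rcases eq_or_lt_of_le hu₁ with h1z | h1p
  · -- u₁ = 0
    rw [← h1z, zero_add, zero_mul, zero_add]
    rcases eq_or_lt_of_le hu₂ with h2z | h2p
    · rw [← h2z]; simp
    · have hv₂ : 0 < v₂ := lt_of_lt_of_le h2p h₂
      have hv : v₂ ≤ v₁ + v₂ := by linarith
      have := Real.log_le_log hv₂ hv
      nlinarith
  · rcases eq_or_lt_of_le hu₂ with h2z | h2p
    · rw [← h2z, add_zero, zero_mul, add_zero]
      have hv₁ : 0 < v₁ := lt_of_lt_of_le h1p h₁
      have hv : v₁ ≤ v₁ + v₂ := by linarith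
      have := Real.log_le_log hv₁ hv
      nlinarith
    · -- both positive
      have hv₁ : 0 < v₁ := lt_of_lt_of_le h1p h₁
      have hv₂ : 0 < v₂ := lt_of_lt_of_le h2p h₂
      have hU : 0 < u₁ + u₂ := by linarith
      have hV : 0 < v₁ + v₂ := by linarith
      have key1 : Real.log ((u₁+u₂) * v₁ / (u₁ * (v₁+v₂))) ≤ (u₁+u₂) * v₁ / (u₁ * (v₁+v₂)) - 1 :=
        Real.log_le_sub_one_of_pos (by positivity)
      have key2 : Real.log ((u₁+u₂) * v₂ / (u₂ * (v₁+v₂))) ≤ (u₁+u₂) * v₂ / (u₂ * (v₁+v₂)) - 1 :=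
        Real.log_le_sub_one_of_pos (by positivity)
      have e1 : Real.log ((u₁+u₂) * v₁ / (u₁ * (v₁+v₂)))
          = Real.log (u₁+u₂) + Real.log v₁ - Real.log u₁ - Real.log (v₁+v₂) := by
        rw [Real.log_div (by positivity) (by positivity),
          Real.log_mul (by positivity) (by positivity),
          Real.log_mul (by positivity) (by positivity)]
        ring
      have e2 : Real.log ((u₁+u₂) * v₂ / (u₂ * (v₁+v₂)))
          = Real.log (u₁+u₂) + Real.log v₂ - Real.log u₂ - Real.log (v₁+v₂) := by
        rw [Real.log_div (by positivity) (by positivity),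
          Real.log_mul (by positivity) (by positivity),
          Real.log_mul (by positivity) (by positivity)]
        ring
      rw [e1] at key1
      rw [e2] at key2
      have m1 : u₁ * (Real.log (u₁+u₂) + Real.log v₁ - Real.log u₁ - Real.log (v₁+v₂))
          ≤ u₁ * ((u₁+u₂) * v₁ / (u₁ * (v₁+v₂)) - 1) :=
        mul_le_mul_of_nonneg_left key1 hu₁
      have m2 : u₂ * (Real.log (u₁+u₂) + Real.log v₂ - Real.log u₂ - Real.log (v₁+v₂))
          ≤ u₂ * ((u₁+u₂) * v₂ / (u₂ * (v₁+v₂)) - 1) :=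
        mul_le_mul_of_nonneg_left key2 hu₂
      have r1 : u₁ * ((u₁+u₂) * v₁ / (u₁ * (v₁+v₂)) - 1) = (u₁+u₂) * v₁ / (v₁+v₂) - u₁ := by
        field_simp
      have r2 : u₂ * ((u₁+u₂) * v₂ / (u₂ * (v₁+v₂)) - 1) = (u₁+u₂) * v₂ / (v₁+v₂) - u₂ := by
        field_simp
      rw [r1] at m1
      rw [r2] at m2
      have hsum : (u₁+u₂) * v₁ / (v₁+v₂) + (u₁+u₂) * v₂ / (v₁+v₂) = u₁ + u₂ := by
        field_simp
      nlinarith [m1, m2, hsum]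

/-- Scaling: `(t*m) * (log (t*m) - log (t*m')) = t * (m * (log m - log m'))`. -/
lemma log_scale (t m m' : ℝ) (ht : 0 ≤ t) (hm : 0 ≤ m) (hmm : m ≤ m') :
    (t * m) * (Real.log (t * m) - Real.log (t * m'))
      = t * (m * (Real.log m - Real.log m')) := by
  rcases eq_or_lt_of_le ht with htz | htp
  · rw [← htz]; simp
  · rcases eq_or_lt_of_le hm with hmz | hmp
    · rw [← hmz]; simp
    · have hm' : 0 < m' := lt_of_lt_of_le hmp hmm
      rw [Real.log_mul (ne_of_gt htp) (ne_of_gt hmp),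
        Real.log_mul (ne_of_gt htp) (ne_of_gt hm')]
      ring

end LogSum

section Fiber

variable {n : ℕ} {A B : Type} [Fintype A] [Fintype B] [DecidableEq A] [DecidableEq B]

lemma fiber_card (S : Finset (Fin (n+1))) (b : Fin (n+1) → B) :
    (univ.filter (fun b' : Fin (n+1) → B => ∀ j ∈ S, b' j = b j)).card
      = Fintype.card ({j : Fin (n+1) // j ∉ S} → B) := by
  rw [← Finset.card_univ]
  refine Finset.card_bij' (fun b' _ => fun j => b' j.1)
    (fun g _ => fun j => if h : j ∈ S then b j else g ⟨j, h⟩) ?_ ?_ ?_ ?_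
  · intro b' _; exact Finset.mem_univ _
  · intro g _
    simp only [Finset.mem_filter, Finset.mem_univ, true_and]
    intro j hj
    simp [hj]
  · intro b' hb'
    simp only [Finset.mem_filter, Finset.mem_univ, true_and] at hb'
    funext j
    by_cases h : j ∈ S
    · simp [h, hb' j h]
    · simp [h]
  · intro g _
    funext j
    simp [j.2]

lemma sum_margB_mul (μ : (Fin (n+1) → A) → (Fin (n+1) → B) → ℝ)
    (S : Finset (Fin (n+1))) (f : (Fin (n+1) → B) → ℝ)
    (hf : ∀ b b' : Fin (n+1) → B, (∀ j ∈ S, b j = b' j) → f b = f b') :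
    ∑ b : Fin (n+1) → B, margB μ S b * f b
      = (Fintype.card ({j : Fin (n+1) // j ∉ S} → B) : ℝ) *
          ∑ a : Fin (n+1) → A, ∑ b : Fin (n+1) → B, μ a b * f b := by
  unfold margB
  have step1 : ∀ b : Fin (n+1) → B,
      (∑ a' : Fin (n+1) → A, ∑ b' : Fin (n+1) → B,
        if ∀ j ∈ S, b' j = b j then μ a' b' else 0) * f b
      = ∑ a' : Fin (n+1) → A, ∑ b' : Fin (n+1) → B,
        (if ∀ j ∈ S, b' j = b j then μ a' b' * f b else 0) := by
    intro b
    rw [Finset.sum_mul]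
    refine Finset.sum_congr rfl fun a' _ => ?_
    rw [Finset.sum_mul]
    refine Finset.sum_congr rfl fun b' _ => ?_
    split_ifs <;> simp
  simp only [step1]
  rw [Finset.sum_comm]
  have step2 : ∀ a' : Fin (n+1) → A,
      (∑ b : Fin (n+1) → B, ∑ b' : Fin (n+1) → B,
        (if ∀ j ∈ S, b' j = b j then μ a' b' * f b else 0))
      = ∑ b' : Fin (n+1) → B,
          (Fintype.card ({j : Fin (n+1) // j ∉ S} → B) : ℝ) * (μ a' b' * f b') := by
    intro a'
    rw [Finset.sum_comm]
    refine Finset.sum_congr rfl fun b' _ => ?_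
    have hval : ∀ b : Fin (n+1) → B, (∀ j ∈ S, b' j = b j) →
        μ a' b' * f b = μ a' b' * f b' := by
      intro b hb
      rw [hf b b' (fun j hj => (hb j hj).symm)]
    calc (∑ b : Fin (n+1) → B, if ∀ j ∈ S, b' j = b j then μ a' b' * f b else 0)
        = ∑ b ∈ univ.filter (fun b : Fin (n+1) → B => ∀ j ∈ S, b' j = b j),
            μ a' b' * f b := by rw [Finset.sum_filter]
      _ = ∑ b ∈ univ.filter (fun b : Fin (n+1) → B => ∀ j ∈ S, b' j = b j),
            μ a' b' * f b' := by
          refine Finset.sum_congr rfl fun b hb => ?_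
          simp only [Finset.mem_filter, Finset.mem_univ, true_and] at hb
          exact hval b hb
      _ = ((univ.filter (fun b : Fin (n+1) → B => ∀ j ∈ S, b' j = b j)).card : ℝ) *
            (μ a' b' * f b') := by rw [Finset.sum_const, nsmul_eq_mul]
      _ = (Fintype.card ({j : Fin (n+1) // j ∉ S} → B) : ℝ) * (μ a' b' * f b') := by
          congr 1
          have : (univ.filter (fun b : Fin (n+1) → B => ∀ j ∈ S, b' j = b j)).card
              = (univ.filter (fun bb : Fin (n+1) → B => ∀ j ∈ S, bb j = b' j)).card := by
            congr 1
            ext bb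
            simp only [Finset.mem_filter, Finset.mem_univ, true_and]
            constructor
            · intro h j hj; exact (h j hj).symm
            · intro h j hj; exact (h j hj).symm
          rw [this, fiber_card S b']
  simp only [step2]
  rw [Finset.mul_sum]
  refine Finset.sum_congr rfl fun a' _ => ?_
  rw [Finset.mul_sum]

end Fiber

section Split

variable {n : ℕ} {A B : Type} [Fintype A] [Fintype B] [DecidableEq A] [DecidableEq B]

lemma cmi_split (Q : Fin (n+1) → (Fin (n+1) → A) → (Fin (n+1) → B) → ℝ)
    (μ : (Fin (n+1) → A) → (Fin (n+1) → B) → ℝ)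
    (hμ : ∀ a b, 0 ≤ μ a b) (i : Fin (n+1))
    (hchain : ∀ a b, marg μ (idxLe n i) (idxLe n i) a b
        = Q i a b * marg μ (idxLe n i) (idxLt n i) a b)
    (hQpos : ∀ a b, μ a b ≠ 0 → 0 < Q i a b) :
    cmi μ (idxLe n i) i (idxLt n i)
      = (∑ a : Fin (n+1) → A, ∑ b : Fin (n+1) → B, μ a b * Real.log (Q i a b))
        + ∑ a : Fin (n+1) → A, ∑ b : Fin (n+1) → B, μ a b *
            (Real.log (margB μ (idxLt n i) b) - Real.log (margB μ (idxLe n i) b)) := by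
  unfold cmi
  rw [← Finset.sum_add_distrib]
  refine Finset.sum_congr rfl fun a _ => ?_
  rw [← Finset.sum_add_distrib]
  refine Finset.sum_congr rfl fun b _ => ?_
  by_cases h0 : μ a b = 0
  · rw [h0]; simp
  · have hpos : 0 < μ a b := lt_of_le_of_ne (hμ a b) (Ne.symm h0)
    have hX : 0 < marg μ (idxLe n i) (idxLt n i) a b :=
      lt_of_lt_of_le hpos (le_marg μ hμ _ _ a b)
    have hm : 0 < margB μ (idxLe n i) b := lt_of_lt_of_le hpos (le_margB μ hμ _ a b)
    have hm' : 0 < margB μ (idxLt n i) b :=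
      lt_of_lt_of_le hm (margB_mono μ hμ (idxLt_subset i) b)
    have hQp : 0 < Q i a b := hQpos a b h0
    rw [insert_idxLt, marg_empty_left, marg_empty_left, hchain a b]
    have hratio : Q i a b * marg μ (idxLe n i) (idxLt n i) a b * margB μ (idxLt n i) b /
        (marg μ (idxLe n i) (idxLt n i) a b * margB μ (idxLe n i) b)
        = Q i a b * (margB μ (idxLt n i) b / margB μ (idxLe n i) b) := by
      field_simp
    rw [hratio, Real.log_mul (ne_of_gt hQp) (ne_of_gt (by positivity)),
      Real.log_div (ne_of_gt hm') (ne_of_gt hm)]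
    ring

lemma Hpart_le [Nonempty B]
    (μ₁ μ₂ : (Fin (n+1) → A) → (Fin (n+1) → B) → ℝ)
    (h1 : ∀ a b, 0 ≤ μ₁ a b) (h2 : ∀ a b, 0 ≤ μ₂ a b)
    (t : ℝ) (ht0 : 0 ≤ t) (ht1 : t ≤ 1) (i : Fin (n+1)) :
    t * (∑ a : Fin (n+1) → A, ∑ b : Fin (n+1) → B, μ₁ a b *
          (Real.log (margB μ₁ (idxLt n i) b) - Real.log (margB μ₁ (idxLe n i) b)))
      + (1 - t) * (∑ a : Fin (n+1) → A, ∑ b : Fin (n+1) → B, μ₂ a b *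
          (Real.log (margB μ₂ (idxLt n i) b) - Real.log (margB μ₂ (idxLe n i) b)))
    ≤ ∑ a : Fin (n+1) → A, ∑ b : Fin (n+1) → B,
        (fun a' b' => t * μ₁ a' b' + (1 - t) * μ₂ a' b') a b *
          (Real.log (margB (fun a' b' => t * μ₁ a' b' + (1 - t) * μ₂ a' b') (idxLt n i) b)
            - Real.log (margB (fun a' b' => t * μ₁ a' b' + (1 - t) * μ₂ a' b') (idxLe n i) b)) := by
  set μt : (Fin (n+1) → A) → (Fin (n+1) → B) → ℝ :=
    fun a' b' => t * μ₁ a' b' + (1 - t) * μ₂ a' b' with hμt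
  have ht : ∀ a b, 0 ≤ μt a b := fun a b => by
    have := h1 a b; have := h2 a b
    simp only [hμt]; nlinarith
  set S := idxLe n i
  set S' := idxLt n i
  have hSS : S' ⊆ S := idxLt_subset i
  set N : ℝ := (Fintype.card ({j : Fin (n+1) // j ∉ S} → B) : ℝ) with hN
  have hNpos : 0 < N := by
    rw [hN]
    exact_mod_cast Fintype.card_pos
  have hfinv : ∀ μ : (Fin (n+1) → A) → (Fin (n+1) → B) → ℝ,
      ∀ b b' : Fin (n+1) → B, (∀ j ∈ S, b j = b' j) →
      (Real.log (margB μ S' b) - Real.log (margB μ S b))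
        = (Real.log (margB μ S' b') - Real.log (margB μ S b')) := by
    intro μ b b' h
    rw [margB_congr μ S b b' h, margB_congr μ S' b b' (fun j hj => h j (hSS hj))]
  have key1 := sum_margB_mul μ₁ S
    (fun b => Real.log (margB μ₁ S' b) - Real.log (margB μ₁ S b)) (hfinv μ₁)
  have key2 := sum_margB_mul μ₂ S
    (fun b => Real.log (margB μ₂ S' b) - Real.log (margB μ₂ S b)) (hfinv μ₂)
  have keyt := sum_margB_mul μt S
    (fun b => Real.log (margB μt S' b) - Real.log (margB μt S b)) (hfinv μt)
  have hb : ∀ b : Fin (n+1) → B,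
      t * (margB μ₁ S b * (Real.log (margB μ₁ S' b) - Real.log (margB μ₁ S b)))
        + (1 - t) * (margB μ₂ S b * (Real.log (margB μ₂ S' b) - Real.log (margB μ₂ S b)))
      ≤ margB μt S b * (Real.log (margB μt S' b) - Real.log (margB μt S b)) := by
    intro b
    have hmix : margB μt S b = t * margB μ₁ S b + (1 - t) * margB μ₂ S b :=
      margB_mix μ₁ μ₂ t (1 - t) S b
    have hmix' : margB μt S' b = t * margB μ₁ S' b + (1 - t) * margB μ₂ S' b :=
      margB_mix μ₁ μ₂ t (1 - t) S' b
    have hm1 : 0 ≤ margB μ₁ S b := margB_nonneg μ₁ h1 S b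
    have hm2 : 0 ≤ margB μ₂ S b := margB_nonneg μ₂ h2 S b
    have hle1 : margB μ₁ S b ≤ margB μ₁ S' b := margB_mono μ₁ h1 hSS b
    have hle2 : margB μ₂ S b ≤ margB μ₂ S' b := margB_mono μ₂ h2 hSS b
    have hls := logsum2 (t * margB μ₁ S b) ((1 - t) * margB μ₂ S b)
      (t * margB μ₁ S' b) ((1 - t) * margB μ₂ S' b)
      (by nlinarith) (by nlinarith)
      (by nlinarith) (by nlinarith)
    have hsc1 := log_scale t (margB μ₁ S b) (margB μ₁ S' b) ht0 hm1 hle1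
    have hsc2 := log_scale (1 - t) (margB μ₂ S b) (margB μ₂ S' b) (by linarith) hm2 hle2
    rw [hsc1, hsc2] at hls
    rw [hmix, hmix']
    nlinarith [hls]
  have hsum := Finset.sum_le_sum (fun b (_ : b ∈ (univ : Finset (Fin (n+1) → B))) => hb b)
  rw [Finset.sum_add_distrib, ← Finset.mul_sum, ← Finset.mul_sum] at hsum
  rw [key1, key2, keyt] at hsum
  nlinarith [hsum, hNpos]
end Split


/-- concavity of directed information in the causally conditioned input
distribution `P(a^n ‖ b^{n-1}) = ∏_i P_i(a_i|a^{i-1},b^{i-1})`, for a fixed channel: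
for any two causally conditioned inputs and `t ∈ [0,1]`, the directed information of
the joint pmf induced by their pointwise convex combination dominates the convex
combination of the directed informations. -/
theorem stmt17 (Q : Fin (n+1) → (Fin (n+1) → A) → (Fin (n+1) → B) → ℝ)
    (hQ : IsChannel Q)
    (P₁ P₂ : Fin (n+1) → (Fin (n+1) → A) → (Fin (n+1) → B) → ℝ)
    (h₁ : IsInput P₁) (h₂ : IsInput P₂)
    (t : ℝ) (ht0 : 0 ≤ t) (ht1 : t ≤ 1) :
    t * DI (joint Q P₁) + (1 - t) * DI (joint Q P₂)
      ≤ DI (fun a b =>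
          (t * ∏ i : Fin (n+1), P₁ i a b + (1 - t) * ∏ i : Fin (n+1), P₂ i a b)
            * ∏ i : Fin (n+1), Q i a b) := by
  classical
  have hμt_eq : (fun a b =>
      (t * ∏ i : Fin (n+1), P₁ i a b + (1 - t) * ∏ i : Fin (n+1), P₂ i a b)
        * ∏ i : Fin (n+1), Q i a b)
      = (fun a b => t * joint Q P₁ a b + (1 - t) * joint Q P₂ a b) := by
    funext a b
    unfold joint
    simp only [Finset.prod_mul_distrib]
    ring
  rw [hμt_eq]
  rcases isEmpty_or_nonempty B with hB | hB
  · have hBf : IsEmpty (Fin (n+1) → B) := ⟨fun f => hB.false (f 0)⟩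
    have hz : ∀ μ : (Fin (n+1) → A) → (Fin (n+1) → B) → ℝ, DI μ = 0 := by
      intro μ
      unfold DI cmi
      simp [Finset.univ_eq_empty]
    rw [hz, hz, hz]
    simp
  · -- main case
    have h1 : ∀ a b, 0 ≤ joint Q P₁ a b := fun a b =>
      Finset.prod_nonneg fun j _ => mul_nonneg (hQ.1 j a b) (h₁.1 j a b)
    have h2 : ∀ a b, 0 ≤ joint Q P₂ a b := fun a b =>
      Finset.prod_nonneg fun j _ => mul_nonneg (hQ.1 j a b) (h₂.1 j a b)
    have ht : ∀ a b, 0 ≤ t * joint Q P₁ a b + (1 - t) * joint Q P₂ a b := by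
      intro a b
      have := h1 a b; have := h2 a b
      nlinarith
    have hQne : ∀ (i : Fin (n+1)) (a : Fin (n+1) → A) (b : Fin (n+1) → B),
        Q i a b = 0 → joint Q P₁ a b = 0 ∧ joint Q P₂ a b = 0 := by
      intro i a b h
      constructor <;>
        exact Finset.prod_eq_zero (Finset.mem_univ i) (by rw [h, zero_mul])
    have hQpos1 : ∀ (i : Fin (n+1)) (a : Fin (n+1) → A) (b : Fin (n+1) → B),
        joint Q P₁ a b ≠ 0 → 0 < Q i a b := by
      intro i a b hne
      rcases (hQ.1 i a b).lt_or_eq with h | h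
      · exact h
      · exact absurd (hQne i a b h.symm).1 hne
    have hQpos2 : ∀ (i : Fin (n+1)) (a : Fin (n+1) → A) (b : Fin (n+1) → B),
        joint Q P₂ a b ≠ 0 → 0 < Q i a b := by
      intro i a b hne
      rcases (hQ.1 i a b).lt_or_eq with h | h
      · exact h
      · exact absurd (hQne i a b h.symm).2 hne
    have hQpost : ∀ (i : Fin (n+1)) (a : Fin (n+1) → A) (b : Fin (n+1) → B),
        (fun a b => t * joint Q P₁ a b + (1 - t) * joint Q P₂ a b) a b ≠ 0 → 0 < Q i a b := by
      intro i a b hne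
      simp only [] at hne
      rcases (hQ.1 i a b).lt_or_eq with h | h
      · exact h
      · exfalso
        apply hne
        rw [(hQne i a b h.symm).1, (hQne i a b h.symm).2]
        ring
    have hchain1 : ∀ (i : Fin (n+1)) (a : Fin (n+1) → A) (b : Fin (n+1) → B),
        marg (joint Q P₁) (idxLe n i) (idxLe n i) a b
          = Q i a b * marg (joint Q P₁) (idxLe n i) (idxLt n i) a b :=
      fun i a b => marg_chain Q P₁ hQ h₁ i a b
    have hchain2 : ∀ (i : Fin (n+1)) (a : Fin (n+1) → A) (b : Fin (n+1) → B),
        marg (joint Q P₂) (idxLe n i) (idxLe n i) a b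
          = Q i a b * marg (joint Q P₂) (idxLe n i) (idxLt n i) a b :=
      fun i a b => marg_chain Q P₂ hQ h₂ i a b
    have hchaint : ∀ (i : Fin (n+1)) (a : Fin (n+1) → A) (b : Fin (n+1) → B),
        marg (fun a b => t * joint Q P₁ a b + (1 - t) * joint Q P₂ a b)
            (idxLe n i) (idxLe n i) a b
          = Q i a b * marg (fun a b => t * joint Q P₁ a b + (1 - t) * joint Q P₂ a b)
              (idxLe n i) (idxLt n i) a b := by
      intro i a b
      rw [marg_mix, marg_mix, hchain1 i a b, hchain2 i a b]
      ring
    have hDI1 : DI (joint Q P₁) = ∑ i : Fin (n+1),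
        ((∑ a : Fin (n+1) → A, ∑ b : Fin (n+1) → B,
            joint Q P₁ a b * Real.log (Q i a b))
          + ∑ a : Fin (n+1) → A, ∑ b : Fin (n+1) → B, joint Q P₁ a b *
              (Real.log (margB (joint Q P₁) (idxLt n i) b)
                - Real.log (margB (joint Q P₁) (idxLe n i) b))) := by
      unfold DI
      exact Finset.sum_congr rfl fun i _ =>
        cmi_split Q (joint Q P₁) h1 i (hchain1 i) (hQpos1 i)
    have hDI2 : DI (joint Q P₂) = ∑ i : Fin (n+1),
        ((∑ a : Fin (n+1) → A, ∑ b : Fin (n+1) → B,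
            joint Q P₂ a b * Real.log (Q i a b))
          + ∑ a : Fin (n+1) → A, ∑ b : Fin (n+1) → B, joint Q P₂ a b *
              (Real.log (margB (joint Q P₂) (idxLt n i) b)
                - Real.log (margB (joint Q P₂) (idxLe n i) b))) := by
      unfold DI
      exact Finset.sum_congr rfl fun i _ =>
        cmi_split Q (joint Q P₂) h2 i (hchain2 i) (hQpos2 i)
    have hDIt : DI (fun a b => t * joint Q P₁ a b + (1 - t) * joint Q P₂ a b)
        = ∑ i : Fin (n+1),
        ((∑ a : Fin (n+1) → A, ∑ b : Fin (n+1) → B,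
            (t * joint Q P₁ a b + (1 - t) * joint Q P₂ a b) * Real.log (Q i a b))
          + ∑ a : Fin (n+1) → A, ∑ b : Fin (n+1) → B,
              (t * joint Q P₁ a b + (1 - t) * joint Q P₂ a b) *
              (Real.log (margB (fun a b => t * joint Q P₁ a b + (1 - t) * joint Q P₂ a b)
                  (idxLt n i) b)
                - Real.log (margB (fun a b => t * joint Q P₁ a b + (1 - t) * joint Q P₂ a b)
                  (idxLe n i) b))) := by
      unfold DI
      exact Finset.sum_congr rfl fun i _ =>
        cmi_split Q (fun a b => t * joint Q P₁ a b + (1 - t) * joint Q P₂ a b)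
          ht i (hchaint i) (hQpost i)
    rw [hDI1, hDI2, hDIt]
    rw [Finset.mul_sum, Finset.mul_sum, ← Finset.sum_add_distrib]
    refine Finset.sum_le_sum fun i _ => ?_
    have hC : (∑ a : Fin (n+1) → A, ∑ b : Fin (n+1) → B,
          (t * joint Q P₁ a b + (1 - t) * joint Q P₂ a b) * Real.log (Q i a b))
        = t * (∑ a : Fin (n+1) → A, ∑ b : Fin (n+1) → B,
            joint Q P₁ a b * Real.log (Q i a b))
          + (1 - t) * (∑ a : Fin (n+1) → A, ∑ b : Fin (n+1) → B,
            joint Q P₂ a b * Real.log (Q i a b)) := by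
      rw [Finset.mul_sum, Finset.mul_sum, ← Finset.sum_add_distrib]
      refine Finset.sum_congr rfl fun a _ => ?_
      rw [Finset.mul_sum, Finset.mul_sum, ← Finset.sum_add_distrib]
      refine Finset.sum_congr rfl fun b _ => ?_
      ring
    have hH := Hpart_le (joint Q P₁) (joint Q P₂) h1 h2 t ht0 ht1 i
    simp only [] at hH
    linarith [hH]
end

section
/- Monotone structure of κ_min: the function κ_min(C) = K_V( Q − R + C²R + sqrt((R(C−1)²+Q)(R(C+1)²+Q)) )/2 with K_V > 0, R > 0, Q ≥ 0 is nonnegative for all C ∈ ℝ, is even in C, and is nondecreasing in |C|; moreover for Q = 0, κ_min(C) = 0 if |C| ≤ 1 and κ_min(C) = K_V R (C² − 1) if |C| ≥ 1. -/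
private lemma key19 (R Q t : ℝ) (hR : 0 ≤ R) (hQ : 0 ≤ Q) :
    |R * t + Q - R| ≤ Real.sqrt ((R * t + R + Q) ^ 2 - 4 * R ^ 2 * t) := by
  rw [Real.le_sqrt (abs_nonneg _), sq_abs]
  · nlinarith [mul_nonneg hR hQ]
  · nlinarith [sq_nonneg (R * t + Q - R), mul_nonneg hR hQ]

private lemma keyP (R Q t : ℝ) (hR : 0 < R) (hQ : 0 ≤ Q) :
    (0:ℝ) ≤ (R * t + R + Q) ^ 2 - 4 * R ^ 2 * t := by
  nlinarith [sq_nonneg (R * t + Q - R), mul_nonneg hR.le hQ]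

/-- monotone structure of `κ_min(C) = K_V(Q − R + C²R + F(C))/2` with
`F(C) = √((R(C−1)²+Q)(R(C+1)²+Q))`: it is nonnegative, even in `C`, nondecreasing in
`|C|`, and for `Q = 0` it equals `0` when `|C| ≤ 1` and `K_V R(C² − 1)` when `|C| ≥ 1`. -/
theorem stmt19 (K_V Q R : ℝ) (hK : 0 < K_V) (hQ : 0 ≤ Q) (hR : 0 < R)
    (κmin : ℝ → ℝ)
    (hκ : ∀ C, κmin C = K_V * (Q - R + C^2 * R
      + Real.sqrt ((R * (C - 1)^2 + Q) * (R * (C + 1)^2 + Q))) / 2) :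
    (∀ C, 0 ≤ κmin C)
    ∧ (∀ C, κmin (-C) = κmin C)
    ∧ (∀ C₁ C₂, |C₁| ≤ |C₂| → κmin C₁ ≤ κmin C₂)
    ∧ (Q = 0 →
        (∀ C, |C| ≤ 1 → κmin C = 0)
        ∧ (∀ C, 1 ≤ |C| → κmin C = K_V * R * (C^2 - 1))) := by
  have hprod : ∀ C : ℝ, (R * (C - 1)^2 + Q) * (R * (C + 1)^2 + Q)
      = (R * C^2 + R + Q) ^ 2 - 4 * R ^ 2 * C^2 := by intro C; ring
  refine ⟨?_, ?_, ?_, ?_⟩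
  · intro C
    rw [hκ, hprod]
    have h1 := key19 R Q (C^2) hR.le hQ
    have h3 : -(Real.sqrt ((R * C^2 + R + Q) ^ 2 - 4 * R ^ 2 * C^2)) ≤ R * C^2 + Q - R := by
      have := neg_abs_le (R * C^2 + Q - R)
      linarith
    have : 0 ≤ Q - R + C^2 * R + Real.sqrt ((R * C^2 + R + Q) ^ 2 - 4 * R ^ 2 * C^2) := by
      linarith
    positivity
  · intro C
    rw [hκ, hκ,
      show ((-C:ℝ))^2 = C^2 from by ring,
      show (R * (-C - 1)^2 + Q) * (R * (-C + 1)^2 + Q)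
        = (R * (C - 1)^2 + Q) * (R * (C + 1)^2 + Q) from by ring]
  · intro C₁ C₂ h
    rw [hκ, hκ, hprod, hprod]
    set t₁ := C₁ ^ 2
    set t₂ := C₂ ^ 2
    have ht : t₁ ≤ t₂ := by
      have := pow_le_pow_left₀ (abs_nonneg C₁) h 2
      simpa [sq_abs] using this
    have hd : (0:ℝ) ≤ t₂ - t₁ := by linarith
    have hP₂ := keyP R Q t₂ hR hQ
    set s := Real.sqrt ((R * t₂ + R + Q) ^ 2 - 4 * R ^ 2 * t₂) with hs_def
    have hs0 : 0 ≤ s := Real.sqrt_nonneg _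
    have hs2 : s ^ 2 = (R * t₂ + R + Q) ^ 2 - 4 * R ^ 2 * t₂ := Real.sq_sqrt hP₂
    have hsge : R - R * t₂ - Q ≤ s := by
      have h1 := key19 R Q t₂ hR.le hQ
      have := neg_abs_le (R * t₂ + Q - R)
      linarith
    have hle : Real.sqrt ((R * t₁ + R + Q) ^ 2 - 4 * R ^ 2 * t₁) ≤ R * (t₂ - t₁) + s := by
      have hrhs : 0 ≤ R * (t₂ - t₁) + s := by positivity
      calc Real.sqrt ((R * t₁ + R + Q) ^ 2 - 4 * R ^ 2 * t₁)
          ≤ Real.sqrt ((R * (t₂ - t₁) + s) ^ 2) := by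
            apply Real.sqrt_le_sqrt
            nlinarith [mul_nonneg (mul_nonneg hR.le hd) (by linarith : 0 ≤ s - (R - R * t₂ - Q))]
        _ = R * (t₂ - t₁) + s := Real.sqrt_sq hrhs
    have : Q - R + t₁ * R + Real.sqrt ((R * t₁ + R + Q) ^ 2 - 4 * R ^ 2 * t₁)
        ≤ Q - R + t₂ * R + s := by linarith
    have hK2 : 0 < K_V / 2 := by linarith
    nlinarith [this, hK.le]
  · intro hQ0
    subst hQ0
    constructor
    · intro C hC
      rw [hκ]
      have h1 : C ^ 2 ≤ 1 := by
        have := abs_le.mp hC; nlinarith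
      rw [show (R * (C - 1)^2 + 0) * (R * (C + 1)^2 + 0) = (R * (1 - C^2)) ^ 2 from by ring,
        Real.sqrt_sq (by nlinarith)]
      ring
    · intro C hC
      rw [hκ]
      have h1 : 1 ≤ C ^ 2 := by
        have := sq_abs C; nlinarith [abs_nonneg C]
      rw [show (R * (C - 1)^2 + 0) * (R * (C + 1)^2 + 0) = (R * (C^2 - 1)) ^ 2 from by ring,
        Real.sqrt_sq (by nlinarith)]
      ring
end
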